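/- arXiv:2511.02137 — 5 statements merged into one kernel-verified Lean document; each statement's English description precedes it below -/
import Mathlib

section
/- Let d be a positive integer, let v : ℝ^d × ℝ → ℝ^d be continuously differentiable, and let p : ℝ^d × ℝ → ℝ be continuously differentiable and strictly positive, satisfying the Liouville continuity equation ∂_s p(x,s) + ∑_{i=1}^d ∂_{x_i}( p(x,s) v_i(x,s) ) = 0 for all x ∈ ℝ^d and s ∈ ℝ. Let x : ℝ → ℝ^d be differentiable with x'(s) = v(x(s), s) for all s. Then for every s, the derivative of s ↦ log p(x(s), s) equals minus the spatial divergence of v at (x(s), s), i.e. d/ds [log p(x(s), s)] = − ∑_{i=1}^d ∂_{x_i} v_i(x(s), s). -/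
/-!
Write `q(t) = p(x(t), t)`. By the chain rule `q' = ∇ₓp · v + ∂ₜp`, and by the product rule the
Liouville equation reads `∂ₜp = -(∇ₓp · v + p div v)`. Hence `q' = -p div v`, and dividing by
`q > 0` gives `(log q)' = -div v`.
-/

section

variable {𝕜 ι : Type*} [RCLike 𝕜] [Fintype ι] [DecidableEq ι]

noncomputable def divergence (g : EuclideanSpace 𝕜 ι → EuclideanSpace 𝕜 ι)
    (y : EuclideanSpace 𝕜 ι) : 𝕜 :=
  ∑ i, fderiv 𝕜 (fun y => g y i) y (EuclideanSpace.single i 1)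

theorem ContinuousLinearMap.apply_eq_sum_smul_single {F : Type*} [NormedAddCommGroup F]
    [NormedSpace 𝕜 F] (L : EuclideanSpace 𝕜 ι →L[𝕜] F) (w : EuclideanSpace 𝕜 ι) :
    L w = ∑ i, w i • L (EuclideanSpace.single i 1) := by
  conv_lhs => rw [← (EuclideanSpace.basisFun ι 𝕜).sum_repr w]
  simp [EuclideanSpace.basisFun_apply]

theorem divergence_mul {f : EuclideanSpace 𝕜 ι → 𝕜} {g : EuclideanSpace 𝕜 ι → EuclideanSpace 𝕜 ι}
    {y : EuclideanSpace 𝕜 ι} (hf : DifferentiableAt 𝕜 f y) (hg : DifferentiableAt 𝕜 g y) :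
    ∑ i, fderiv 𝕜 (fun y => f y * g y i) y (EuclideanSpace.single i 1)
      = fderiv 𝕜 f y (g y) + f y * divergence g y := by
  have hgi : ∀ i, DifferentiableAt 𝕜 (fun y => g y i) y := fun i =>
    (EuclideanSpace.proj i : EuclideanSpace 𝕜 ι →L[𝕜] 𝕜).differentiableAt.comp y hg
  simp only [fderiv_fun_mul hf (hgi _), divergence, (fderiv 𝕜 f y).apply_eq_sum_smul_single (g y),
    Finset.mul_sum, ← Finset.sum_add_distrib]
  refine Finset.sum_congr rfl fun i _ => ?_
  simp only [add_apply, smul_apply, smul_eq_mul]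
  ring

end

theorem DifferentiableAt.hasDerivAt_comp_prodMk {𝕜 E F : Type*} [NontriviallyNormedField 𝕜]
    [NormedAddCommGroup E] [NormedSpace 𝕜 E] [NormedAddCommGroup F] [NormedSpace 𝕜 F]
    {f : E × 𝕜 → F} {x : 𝕜 → E} {w : E} {t : 𝕜}
    (hf : DifferentiableAt 𝕜 f (x t, t)) (hx : HasDerivAt x w t) :
    HasDerivAt (fun τ => f (x τ, τ))
      (fderiv 𝕜 (fun y => f (y, t)) (x t) w + deriv (fun τ => f (x t, τ)) t) t := by
  have hpartial_x : fderiv 𝕜 (fun y => f (y, t)) (x t) w = fderiv 𝕜 f (x t, t) (w, 0) := by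
    have h : HasFDerivAt (fun y => f (y, t)) _ (x t) :=
      hf.hasFDerivAt.comp (x t) (hasFDerivAt_prodMk_left (𝕜 := 𝕜) (x t) t)
    rw [h.fderiv]
    rfl
  have hpartial_t : deriv (fun τ => f (x t, τ)) t = fderiv 𝕜 f (x t, t) (0, 1) :=
    (hf.hasFDerivAt.comp t (hasFDerivAt_prodMk_right (x t) t)).hasDerivAt.deriv
  rw [hpartial_x, hpartial_t, ← map_add, Prod.mk_add_mk, add_zero, zero_add]
  exact hf.hasFDerivAt.comp_hasDerivAt (f := fun τ => (x τ, τ)) t (hx.prodMk (hasDerivAt_id t))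

theorem log_density_derivative_eq_neg_divergence_general
    (d : ℕ)
    (v : EuclideanSpace ℝ (Fin d) × ℝ → EuclideanSpace ℝ (Fin d))
    (hv : ContDiff ℝ 1 v)
    (p : EuclideanSpace ℝ (Fin d) × ℝ → ℝ)
    (hp : ContDiff ℝ 1 p)
    (hp_pos : ∀ (x : EuclideanSpace ℝ (Fin d)) (s : ℝ), 0 < p (x, s))
    (hLiouville : ∀ (x : EuclideanSpace ℝ (Fin d)) (s : ℝ),
      deriv (fun t => p (x, t)) s
        + ∑ i : Fin d,
            fderiv ℝ (fun y => p (y, s) * v (y, s) i) x (EuclideanSpace.single i 1) = 0)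
    (x : ℝ → EuclideanSpace ℝ (Fin d))
    (hx : ∀ s : ℝ, HasDerivAt x (v (x s, s)) s) :
    ∀ s : ℝ, HasDerivAt (fun t => Real.log (p (x t, t)))
      (-∑ i : Fin d,
          fderiv ℝ (fun y => v (y, s) i) (x s) (EuclideanSpace.single i 1)) s := by
  intro s
  have hp_diff : Differentiable ℝ p := hp.differentiable one_ne_zero
  have hv_diff : Differentiable ℝ v := hv.differentiable one_ne_zero
  have hdensity := (hp_diff (x s, s)).hasDerivAt_comp_prodMk (hx s)
  have hflux := divergence_mul (f := fun y => p (y, s)) (g := fun y => v (y, s)) (y := x s)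
    (by fun_prop) (by fun_prop)
  have hL := hLiouville (x s) s
  rw [hflux] at hL
  convert hdensity.log (hp_pos (x s) s).ne' using 1
  rw [eq_div_iff (hp_pos (x s) s).ne']
  change -divergence (fun y => v (y, s)) (x s) * _ = _
  linarith

/-- Along a trajectory of the ODE `x'(s) = v(x(s), s)`, if the density `p`
satisfies the Liouville continuity equation, then the derivative of
`s ↦ log p(x(s), s)` equals minus the spatial divergence of `v` at `(x(s), s)`. -/
theorem log_density_derivative_eq_neg_divergence
    (d : ℕ) (hd : 0 < d)
    (v : EuclideanSpace ℝ (Fin d) × ℝ → EuclideanSpace ℝ (Fin d))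
    (hv : ContDiff ℝ 1 v)
    (p : EuclideanSpace ℝ (Fin d) × ℝ → ℝ)
    (hp : ContDiff ℝ 1 p)
    (hp_pos : ∀ (x : EuclideanSpace ℝ (Fin d)) (s : ℝ), 0 < p (x, s))
    (hLiouville : ∀ (x : EuclideanSpace ℝ (Fin d)) (s : ℝ),
      deriv (fun t => p (x, t)) s
        + ∑ i : Fin d,
            fderiv ℝ (fun y => p (y, s) * v (y, s) i) x (EuclideanSpace.single i 1) = 0)
    (x : ℝ → EuclideanSpace ℝ (Fin d))
    (hx : ∀ s : ℝ, HasDerivAt x (v (x s, s)) s) :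
    ∀ s : ℝ, HasDerivAt (fun t => Real.log (p (x t, t)))
      (-∑ i : Fin d,
          fderiv ℝ (fun y => v (y, s) i) (x s) (EuclideanSpace.single i 1)) s :=
  log_density_derivative_eq_neg_divergence_general d v hv p hp hp_pos hLiouville x hx
end

section
/- Let v : ℝ × ℝ → ℝ be continuously differentiable and let p : ℝ × ℝ → ℝ be continuously differentiable and strictly positive, satisfying the one-dimensional Liouville continuity equation ∂_s p(x,s) + ∂_x( p(x,s) v(x,s) ) = 0 for all x ∈ ℝ and s ∈ ℝ. Let x : ℝ → ℝ be differentiable with x'(s) = v(x(s), s) for all s ∈ [0,1]. Then log p(x(0), 0) = log p(x(1), 1) + ∫_0^1 ∂_x v(x(s), s) ds. -/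
/-!
Along a characteristic `s ↦ (x s, s)` the chain rule and the continuity equation give
`d/ds p(x(s), s) = v ∂ₓp + ∂ₛp = v ∂ₓp - ∂ₓ(p v) = -p ∂ₓv`,
so `d/ds log p(x(s), s) = -∂ₓv(x(s), s)`, and the formula is the fundamental theorem of calculus
on `[0, 1]`.
-/

open Set intervalIntegral

section PartialDerivatives

variable {E : Type*} [NormedAddCommGroup E] [NormedSpace ℝ E] {f : ℝ × ℝ → E}

theorem HasFDerivAt.hasDerivAt_fst_slice {f' : ℝ × ℝ →L[ℝ] E} {a s : ℝ}
    (hf : HasFDerivAt f f' (a, s)) : HasDerivAt (fun y => f (y, s)) (f' (1, 0)) a :=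
  hf.comp_hasDerivAt a ((hasDerivAt_id a).prodMk (hasDerivAt_const a s))

theorem HasFDerivAt.hasDerivAt_snd_slice {f' : ℝ × ℝ →L[ℝ] E} {a s : ℝ}
    (hf : HasFDerivAt f f' (a, s)) : HasDerivAt (fun t => f (a, t)) (f' (0, 1)) s :=
  hf.comp_hasDerivAt s ((hasDerivAt_const s a).prodMk (hasDerivAt_id s))

theorem DifferentiableAt.hasDerivAt_comp_graph {x : ℝ → ℝ} {x' s : ℝ}
    (hf : DifferentiableAt ℝ f (x s, s)) (hx : HasDerivAt x x' s) :
    HasDerivAt (fun t => f (x t, t))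
      (x' • deriv (fun y => f (y, s)) (x s) + deriv (fun t => f (x s, t)) s) s := by
  have hdecomp : ((x', 1) : ℝ × ℝ) = x' • ((1, 0) : ℝ × ℝ) + (0, 1) := by simp
  have h : HasDerivAt (fun t => f (x t, t)) (fderiv ℝ f (x s, s) (x', 1)) s :=
    hf.hasFDerivAt.comp_hasDerivAt (f := fun t => (x t, t)) s (hx.prodMk (hasDerivAt_id s))
  rwa [hdecomp, map_add, map_smul, ← hf.hasFDerivAt.hasDerivAt_fst_slice.deriv,
    ← hf.hasFDerivAt.hasDerivAt_snd_slice.deriv] at h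

theorem ContDiff.continuous_deriv_fst_slice (hf : ContDiff ℝ 1 f) :
    Continuous fun q : ℝ × ℝ => deriv (fun y => f (y, q.2)) q.1 := by
  have hslice :
      (fun q : ℝ × ℝ => deriv (fun y => f (y, q.2)) q.1) = fun q => fderiv ℝ f q (1, 0) :=
    funext fun q => ((hf.differentiable one_ne_zero q).hasFDerivAt.hasDerivAt_fst_slice).deriv
  rw [hslice]
  exact (hf.continuous_fderiv one_ne_zero).clm_apply continuous_const

end PartialDerivatives

section Characteristics

variable {v p : ℝ × ℝ → ℝ} {x : ℝ → ℝ} {s : ℝ}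

theorem hasDerivAt_density_along_characteristic
    (hv : DifferentiableAt ℝ v (x s, s)) (hp : DifferentiableAt ℝ p (x s, s))
    (hLiouville : deriv (fun t => p (x s, t)) s
      + deriv (fun y => p (y, s) * v (y, s)) (x s) = 0)
    (hx : HasDerivAt x (v (x s, s)) s) :
    HasDerivAt (fun t => p (x t, t)) (-(p (x s, s) * deriv (fun y => v (y, s)) (x s))) s := by
  have hflux : deriv (fun y => p (y, s) * v (y, s)) (x s)
      = deriv (fun y => p (y, s)) (x s) * v (x s, s)
        + p (x s, s) * deriv (fun y => v (y, s)) (x s) :=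
    deriv_mul hp.hasFDerivAt.hasDerivAt_fst_slice.differentiableAt
      hv.hasFDerivAt.hasDerivAt_fst_slice.differentiableAt
  refine (hp.hasDerivAt_comp_graph hx).congr_deriv ?_
  rw [smul_eq_mul]
  linarith

theorem hasDerivAt_log_density_along_characteristic
    (hv : DifferentiableAt ℝ v (x s, s)) (hp : DifferentiableAt ℝ p (x s, s))
    (hLiouville : deriv (fun t => p (x s, t)) s
      + deriv (fun y => p (y, s) * v (y, s)) (x s) = 0)
    (hp_pos : 0 < p (x s, s)) (hx : HasDerivAt x (v (x s, s)) s) :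
    HasDerivAt (fun t => Real.log (p (x t, t))) (-deriv (fun y => v (y, s)) (x s)) s := by
  convert (hasDerivAt_density_along_characteristic hv hp hLiouville hx).log hp_pos.ne' using 1
  field_simp

end Characteristics

/-- Single-step log-density formula of a one-dimensional continuous normalizing flow:
if `p` satisfies the 1-D Liouville continuity equation and `x` solves `x' = v(x, s)`
on `[0,1]`, then `log p(x(0), 0) = log p(x(1), 1) + ∫_0^1 ∂_x v(x(s), s) ds`. -/
theorem cnf_log_density_formula
    (v : ℝ × ℝ → ℝ) (hv : ContDiff ℝ 1 v)
    (p : ℝ × ℝ → ℝ) (hp : ContDiff ℝ 1 p)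
    (hp_pos : ∀ (x s : ℝ), 0 < p (x, s))
    (hLiouville : ∀ (x s : ℝ),
      deriv (fun t => p (x, t)) s + deriv (fun y => p (y, s) * v (y, s)) x = 0)
    (x : ℝ → ℝ)
    (hx : ∀ s ∈ Set.Icc (0 : ℝ) 1, HasDerivAt x (v (x s, s)) s) :
    Real.log (p (x 0, 0))
      = Real.log (p (x 1, 1)) + ∫ s in (0 : ℝ)..1, deriv (fun y => v (y, s)) (x s) := by
  rw [← uIcc_of_le zero_le_one] at hx
  have hlog_deriv : ∀ s ∈ uIcc (0 : ℝ) 1, HasDerivAt (fun t => Real.log (p (x t, t)))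
      (-deriv (fun y => v (y, s)) (x s)) s := fun s hs =>
    hasDerivAt_log_density_along_characteristic (hv.differentiable one_ne_zero _)
      (hp.differentiable one_ne_zero _) (hLiouville _ _) (hp_pos _ _) (hx s hs)
  have hx_cont : ContinuousOn x (uIcc 0 1) := fun s hs =>
    (hx s hs).continuousAt.continuousWithinAt
  have hint :
      IntervalIntegrable (fun s => -deriv (fun y => v (y, s)) (x s)) MeasureTheory.volume 0 1 :=
    (hv.continuous_deriv_fst_slice.comp_continuousOn (hx_cont.prodMk continuousOn_id)).neg
      |>.intervalIntegrable
  have hftc := integral_eq_sub_of_hasDerivAt hlog_deriv hint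
  rw [integral_neg] at hftc
  linarith
end

section
/- Let S be a nonempty type and let q : S → ℝ → ℝ be a family of maps such that for every s ∈ S, q(s) is continuous on [0,1] and strictly increasing on [0,1], and such that for all s, s' ∈ S the pushforward under q(s) of Lebesgue measure restricted to [0,1] equals the pushforward under q(s') of Lebesgue measure restricted to [0,1]. Then there exists a single function g : ℝ → ℝ such that for every s ∈ S and every u ∈ [0,1], q(s)(u) = g(u). -/
open MeasureTheory

/-!
Let `ν` be the common law and `F t = ν (Iic t)` its distribution function. Since `q s` is
strictly increasing, `F (q s u) = u` on `[0,1]`; as `F` is monotone, `q s u ≤ q s' u'` forces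
`u ≤ u'`. If `q s' u < q s u`, continuity of both maps keeps `q s' v < q s u` and
`q s' u < q s v` for all `v` near `u`, and the two comparisons give `v = u`: then `u` would be
an isolated point of `[0,1]`.
-/

open Set Filter Topology

theorem mem_closure_Icc_diff_singleton {α : Type*} [LinearOrder α] [TopologicalSpace α]
    [OrderTopology α] [DenselyOrdered α] {a b u : α} (hab : a < b) (hu : u ∈ Icc a b) :
    u ∈ closure (Icc a b \ {u}) := by
  rcases hu.2.lt_or_eq with hub | rfl
  · have hsub : Ioc u b ⊆ Icc a b \ {u} := fun v hv => ⟨⟨hu.1.trans hv.1.le, hv.2⟩, hv.1.ne'⟩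
    refine closure_mono hsub ?_
    rw [closure_Ioc hub.ne]
    exact left_mem_Icc.2 hub.le
  · have hsub : Ico a u ⊆ Icc a u \ {u} := fun v hv => ⟨⟨hv.1, hv.2.le⟩, hv.2.ne⟩
    refine closure_mono hsub ?_
    rw [closure_Ico hab.ne]
    exact right_mem_Icc.2 hab.le

theorem StrictMonoOn.preimage_Iic_inter_Icc {α β : Type*} [LinearOrder α] [Preorder β]
    {f : α → β} {a b u : α} (hf : StrictMonoOn f (Icc a b)) (hu : u ∈ Icc a b) :
    f ⁻¹' Iic (f u) ∩ Icc a b = Icc a u := by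
  ext v
  constructor
  · rintro ⟨hvu, hv⟩
    exact ⟨hv.1, (hf.le_iff_le hv hu).1 hvu⟩
  · rintro ⟨hav, hvu⟩
    have hv : v ∈ Icc a b := ⟨hav, hvu.trans hu.2⟩
    exact ⟨(hf.le_iff_le hv hu).2 hvu, hv⟩

section PushforwardOfIcc

variable {a b : ℝ} {f g : ℝ → ℝ}

theorem map_restrict_Icc_apply_Iic (hf_cont : ContinuousOn f (Icc a b))
    (hf_mono : StrictMonoOn f (Icc a b)) {u : ℝ} (hu : u ∈ Icc a b) :
    (volume.restrict (Icc a b)).map f (Iic (f u)) = ENNReal.ofReal (u - a) := by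
  rw [Measure.map_apply_of_aemeasurable (hf_cont.aemeasurable measurableSet_Icc)
      measurableSet_Iic, Measure.restrict_apply' measurableSet_Icc,
    hf_mono.preimage_Iic_inter_Icc hu, Real.volume_Icc]

theorem le_of_le_of_map_restrict_Icc_eq (hf_cont : ContinuousOn f (Icc a b))
    (hf_mono : StrictMonoOn f (Icc a b)) (hg_cont : ContinuousOn g (Icc a b))
    (hg_mono : StrictMonoOn g (Icc a b))
    (hmap : (volume.restrict (Icc a b)).map f = (volume.restrict (Icc a b)).map g)
    ⦃u u' : ℝ⦄ (hu : u ∈ Icc a b) (hu' : u' ∈ Icc a b)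
    (hle : f u ≤ g u') : u ≤ u' := by
  have hF : ENNReal.ofReal (u - a) ≤ ENNReal.ofReal (u' - a) := by
    rw [← map_restrict_Icc_apply_Iic hf_cont hf_mono hu,
      ← map_restrict_Icc_apply_Iic hg_cont hg_mono hu', hmap]
    exact measure_mono (Iic_subset_Iic.2 hle)
  have := (ENNReal.ofReal_le_ofReal_iff (sub_nonneg.2 hu'.1)).1 hF
  linarith

theorem not_lt_of_map_restrict_Icc_eq (hf_cont : ContinuousOn f (Icc a b))
    (hf_mono : StrictMonoOn f (Icc a b)) (hg_cont : ContinuousOn g (Icc a b))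
    (hg_mono : StrictMonoOn g (Icc a b))
    (hmap : (volume.restrict (Icc a b)).map f = (volume.restrict (Icc a b)).map g)
    (hab : a < b) {u : ℝ} (hu : u ∈ Icc a b) :
    ¬ g u < f u := by
  intro hlt
  have hnear : ∀ᶠ v in 𝓝[Icc a b] u, g v < f u ∧ g u < f v :=
    ((hg_cont u hu).eventually_lt continuousWithinAt_const hlt).and
      (continuousWithinAt_const.eventually_lt (hf_cont u hu) hlt)
  have hpinned : ∀ᶠ v in 𝓝[Icc a b \ {u}] u, False := by
    filter_upwards [nhdsWithin_mono _ sdiff_subset hnear, self_mem_nhdsWithin]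
      with v ⟨hgv, hfv⟩ ⟨hv, hvu⟩
    have hle := le_of_le_of_map_restrict_Icc_eq hg_cont hg_mono hf_cont hf_mono hmap.symm
    exact hvu (le_antisymm (hle hv hu hgv.le) (hle hu hv hfv.le))
  have := mem_closure_iff_nhdsWithin_neBot.1 (mem_closure_Icc_diff_singleton hab hu)
  exact hpinned.exists.elim fun _ h => h

theorem eqOn_of_map_restrict_Icc_eq (hf_cont : ContinuousOn f (Icc a b))
    (hf_mono : StrictMonoOn f (Icc a b)) (hg_cont : ContinuousOn g (Icc a b))
    (hg_mono : StrictMonoOn g (Icc a b))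
    (hmap : (volume.restrict (Icc a b)).map f = (volume.restrict (Icc a b)).map g)
    (hab : a < b) : EqOn f g (Icc a b) := fun _ hu =>
  le_antisymm
    (not_lt.1 (not_lt_of_map_restrict_Icc_eq hf_cont hf_mono hg_cont hg_mono hmap hab hu))
    (not_lt.1 (not_lt_of_map_restrict_Icc_eq hg_cont hg_mono hf_cont hf_mono hmap.symm hab hu))

end PushforwardOfIcc

theorem encoder_functionally_invariant_general
    (S : Type*)
    (q : S → ℝ → ℝ)
    (hq_cont : ∀ s : S, ContinuousOn (q s) (Set.Icc (0 : ℝ) 1))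
    (hq_mono : ∀ s : S, StrictMonoOn (q s) (Set.Icc (0 : ℝ) 1))
    (hmap : ∀ s s' : S, (volume.restrict (Set.Icc (0 : ℝ) 1)).map (q s)
      = (volume.restrict (Set.Icc (0 : ℝ) 1)).map (q s')) :
    ∃ g : ℝ → ℝ, ∀ (s : S), ∀ u ∈ Set.Icc (0 : ℝ) 1, q s u = g u := by
  rcases isEmpty_or_nonempty S with hS | ⟨⟨s₀⟩⟩
  · exact ⟨0, fun s => isEmptyElim s⟩
  · exact ⟨q s₀, fun s => eqOn_of_map_restrict_Icc_eq (hq_cont s) (hq_mono s) (hq_cont s₀)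
      (hq_mono s₀) (hmap s s₀) zero_lt_one⟩

/-- Deterministic core of Proposition 2 (encoded latent as a function of the exogenous
noise): if `q s` is continuous and strictly increasing on `[0,1]` for every conditioning
state `s`, and the pushforward of the uniform law on `[0,1]` under `q s` does not depend
on `s`, then there is a single function `g` with `q s u = g u` for all `s` and `u ∈ [0,1]`. -/
theorem encoder_functionally_invariant
    (S : Type*) [Nonempty S]
    (q : S → ℝ → ℝ)
    (hq_cont : ∀ s : S, ContinuousOn (q s) (Set.Icc (0 : ℝ) 1))
    (hq_mono : ∀ s : S, StrictMonoOn (q s) (Set.Icc (0 : ℝ) 1))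
    (hmap : ∀ s s' : S, (volume.restrict (Set.Icc (0 : ℝ) 1)).map (q s)
      = (volume.restrict (Set.Icc (0 : ℝ) 1)).map (q s')) :
    ∃ g : ℝ → ℝ, ∀ (s : S), ∀ u ∈ Set.Icc (0 : ℝ) 1, q s u = g u :=
  encoder_functionally_invariant_general S q hq_cont hq_mono hmap
end

section
/- Let (Ω, 𝔽, μ) be a probability space, let 𝒮 be a measurable space with countably generated σ-algebra, let S : Ω → 𝒮 and U : Ω → ℝ be measurable with S and U independent, and let F : 𝒮 × ℝ → ℝ be measurable (jointly). Write Z(ω) = F(S(ω), U(ω)). If additionally Z and S are independent, then for (μ.map S)-almost every s ∈ 𝒮, the pushforward of the law of U under F(s,·) equals the law of Z; i.e. (μ.map U).map(F(s,·)) = μ.map Z for a.e. s. -/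
/-!
The joint law of `(S, Z)` disintegrates over the law of `S` in two ways. Since `S` and `U` are
independent, it is `law S ⊗ₘ κ` with `κ s = law (F (s, U))`; since `Z` and `S` are independent,
it is `law S ⊗ₘ const (law Z)`. Disintegrations into a countably generated space such as `ℝ`
are unique almost everywhere, so `κ s = law Z` for almost every `s`.
-/

open MeasureTheory ProbabilityTheory

namespace ProbabilityTheory

variable {α β γ : Type*} {mα : MeasurableSpace α} {mβ : MeasurableSpace β}
  {mγ : MeasurableSpace γ} {F : α × β → γ}

lemma Kernel.map_id_prod_const_apply (ν : Measure β) [SFinite ν] (hF : Measurable F) (a : α) :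
    ((Kernel.id ×ₖ Kernel.const α ν).map F) a = ν.map (fun b ↦ F (a, b)) := by
  rw [Kernel.map_apply _ hF, Kernel.prod_apply, Kernel.id_apply, Kernel.const_apply,
    Measure.dirac_prod, Measure.map_map hF measurable_prodMk_left]
  rfl

lemma _root_.MeasureTheory.Measure.compProd_map_id_prod_const (μ : Measure α) [SFinite μ]
    (ν : Measure β) [SFinite ν] (hF : Measurable F) :
    μ ⊗ₘ (Kernel.id ×ₖ Kernel.const α ν).map F = (μ.prod ν).map (fun p ↦ (p.1, F p)) := by
  ext t ht
  have hg : Measurable (fun p : α × β ↦ (p.1, F p)) := measurable_fst.prodMk hF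
  rw [Measure.compProd_apply ht, Measure.map_apply hg ht, Measure.prod_apply (hg ht)]
  refine lintegral_congr fun a ↦ ?_
  rw [Kernel.map_id_prod_const_apply ν hF,
    Measure.map_apply (by fun_prop) (measurable_prodMk_left ht)]
  rfl

lemma IndepFun.map_prodMk_apply_eq_compProd {Ω : Type*} {mΩ : MeasurableSpace Ω}
    {μ : Measure Ω} [IsFiniteMeasure μ] {X : Ω → α} {Y : Ω → β}
    (hXY : IndepFun X Y μ) (hX : Measurable X) (hY : Measurable Y) (hF : Measurable F) :
    μ.map (fun ω ↦ (X ω, F (X ω, Y ω))) =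
      μ.map X ⊗ₘ (Kernel.id ×ₖ Kernel.const α (μ.map Y)).map F := by
  rw [Measure.compProd_map_id_prod_const _ _ hF,
    ← (indepFun_iff_map_prod_eq_prod_map_map hX.aemeasurable hY.aemeasurable).mp hXY,
    Measure.map_map (measurable_fst.prodMk hF) (hX.prodMk hY)]
  rfl

end ProbabilityTheory

theorem conditional_law_eq_marginal_of_indep_general
    {Ω : Type*} [MeasurableSpace Ω] (μ : Measure Ω) [IsProbabilityMeasure μ]
    {𝒮 : Type*} [MeasurableSpace 𝒮]
    (S : Ω → 𝒮) (U : Ω → ℝ)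
    (hS : Measurable S) (hU : Measurable U)
    (hindepSU : ProbabilityTheory.IndepFun S U μ)
    (F : 𝒮 × ℝ → ℝ) (hF : Measurable F)
    (hindepZS : ProbabilityTheory.IndepFun (fun ω => F (S ω, U ω)) S μ) :
    ∀ᵐ s ∂(μ.map S),
      (μ.map U).map (fun u => F (s, u)) = μ.map (fun ω => F (S ω, U ω)) := by
  have hZ : Measurable fun ω ↦ F (S ω, U ω) := hF.comp (hS.prodMk hU)
  have hdisintegrations : μ.map S ⊗ₘ (Kernel.id ×ₖ Kernel.const 𝒮 (μ.map U)).map F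
      = μ.map S ⊗ₘ Kernel.const 𝒮 (μ.map fun ω ↦ F (S ω, U ω)) := by
    rw [← hindepSU.map_prodMk_apply_eq_compProd hS hU hF, Measure.compProd_const,
      (indepFun_iff_map_prod_eq_prod_map_map hS.aemeasurable hZ.aemeasurable).mp hindepZS.symm]
  filter_upwards [Kernel.ae_eq_of_compProd_eq hdisintegrations] with s hs
  rwa [Kernel.map_id_prod_const_apply _ hF, Kernel.const_apply] at hs

/-- Key consequence of Assumption (A3): if `Z = F(S, U)` is independent of the
conditioning state `S` (with `S` and `U` themselves independent), then for almost
every `s` with respect to the law of `S`, the pushforward of the law of `U` under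
`F(s, ·)` equals the (marginal) law of `Z`. -/
theorem conditional_law_eq_marginal_of_indep
    {Ω : Type*} [MeasurableSpace Ω] (μ : Measure Ω) [IsProbabilityMeasure μ]
    {𝒮 : Type*} [MeasurableSpace 𝒮] [MeasurableSpace.CountablyGenerated 𝒮]
    (S : Ω → 𝒮) (U : Ω → ℝ)
    (hS : Measurable S) (hU : Measurable U)
    (hindepSU : ProbabilityTheory.IndepFun S U μ)
    (F : 𝒮 × ℝ → ℝ) (hF : Measurable F)
    (hindepZS : ProbabilityTheory.IndepFun (fun ω => F (S ω, U ω)) S μ) :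
    ∀ᵐ s ∂(μ.map S),
      (μ.map U).map (fun u => F (s, u)) = μ.map (fun ω => F (S ω, U ω)) :=
  conditional_law_eq_marginal_of_indep_general μ S U hS hU hindepSU F hF hindepZS
end

section
/- Let Φ : ℝ → (ℕ → ℝ) → ℕ → ℝ, f : (ℕ → ℝ) → ℕ → ℝ → ℝ, and g : ℝ → ℝ be functions satisfying: (Causality) for all trajectories x, y : ℕ → ℝ and all t ∈ ℕ, if x(s) = y(s) for every s < t then f(x, t, u) = f(y, t, u) for all u and Φ(z, x, t) = Φ(z, y, t) for all z; (Injectivity) for every trajectory x and every t, the map z ↦ Φ(z, x, t) is injective; (Invariance) for every trajectory x, every t, and every u, Φ( f(x, t, u), x, t ) = g(u). Let u : ℕ → ℝ be a noise sequence, let I ⊆ ℕ be an intervention set with values γ : ℕ → ℝ, and let x_F, x_CF, x̂ : ℕ → ℝ be sequences satisfying: x_F(t) = f(x_F, t, u(t)) for all t; x_CF(t) = γ(t) if t ∈ I and x_CF(t) = f(x_CF, t, u(t)) otherwise; x̂(t) = γ(t) if t ∈ I and Φ( x̂(t), x̂, t ) = Φ( x_F(t), x_F, t ) otherwise. Then x̂(t)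 = x_CF(t) for every t ∈ ℕ. -/
/-!
Strong induction on `t`. Off the intervention set the two trajectories share their past, so by
causality the code of `x̂ t` may be computed under the counterfactual history. By invariance the
factual value encodes to `g (u t)`, and so does the counterfactual value, being the mechanism's
output on the same noise; injectivity of the encoder then forces `x̂ t = x_CF t`.
-/

section Recovery

variable {α U C : Type*} (Φ : α → (ℕ → α) → ℕ → C) (f : (ℕ → α) → ℕ → U → α) (g : U → C)

theorem encode_mechanism_eq_of_invariant
    (hinv : ∀ (x : ℕ → α) (t : ℕ) (v : U), Φ (f x t v) x t = g v)
    {x : ℕ → α} {t : ℕ} {v : U} (hx : x t = f x t v) :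
    Φ (x t) x t = g v := by
  rw [hx, hinv]

theorem eq_mechanism_of_encode_eq
    (hcausal : ∀ (x y : ℕ → α) (t : ℕ), (∀ s < t, x s = y s) → ∀ z, Φ z x t = Φ z y t)
    (hinj : ∀ (x : ℕ → α) (t : ℕ), Function.Injective (fun z => Φ z x t))
    (hinv : ∀ (x : ℕ → α) (t : ℕ) (v : U), Φ (f x t v) x t = g v)
    {x y : ℕ → α} {t : ℕ} {v : U} (hpast : ∀ s < t, x s = y s)
    (hy : y t = f y t v) (hx : Φ (x t) x t = g v) :
    x t = y t :=
  hinj y t <| calc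
    Φ (x t) y t = Φ (x t) x t := (hcausal x y t hpast (x t)).symm
    _ = g v := hx
    _ = Φ (y t) y t := (encode_mechanism_eq_of_invariant Φ f g hinv hy).symm

end Recovery

/-- Counterfactual recovery over trajectories (paper's Corollary): under causality of
the mechanism `f` and the encoder `Φ` in the past of the trajectory, injectivity of the
encoder in the value, and invariance of the encoded mechanism output (it equals `g(u)`,
a function of the exogenous noise only), the abduction–action–prediction procedure `x̂`
recovers the true counterfactual trajectory `x_CF` exactly. -/
theorem counterfactual_trajectory_recovery
    (Φ : ℝ → (ℕ → ℝ) → ℕ → ℝ)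
    (f : (ℕ → ℝ) → ℕ → ℝ → ℝ)
    (g : ℝ → ℝ)
    (hcausal : ∀ (x y : ℕ → ℝ) (t : ℕ), (∀ s < t, x s = y s) →
      (∀ u : ℝ, f x t u = f y t u) ∧ (∀ z : ℝ, Φ z x t = Φ z y t))
    (hinj : ∀ (x : ℕ → ℝ) (t : ℕ), Function.Injective (fun z => Φ z x t))
    (hinv : ∀ (x : ℕ → ℝ) (t : ℕ) (u : ℝ), Φ (f x t u) x t = g u)
    (u : ℕ → ℝ) (I : Set ℕ) (γ : ℕ → ℝ)
    (xF xCF xhat : ℕ → ℝ)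
    (hxF : ∀ t, xF t = f xF t (u t))
    (hxCF : ∀ t, (t ∈ I → xCF t = γ t) ∧ (t ∉ I → xCF t = f xCF t (u t)))
    (hxhat : ∀ t, (t ∈ I → xhat t = γ t) ∧ (t ∉ I → Φ (xhat t) xhat t = Φ (xF t) xF t)) :
    ∀ t : ℕ, xhat t = xCF t := by
  intro t
  induction t using Nat.strong_induction_on with
  | _ t ih =>
    by_cases ht : t ∈ I
    · rw [(hxhat t).1 ht, (hxCF t).1 ht]
    · have habduct : Φ (xhat t) xhat t = g (u t) :=
        ((hxhat t).2 ht).trans (encode_mechanism_eq_of_invariant Φ f g hinv (hxF t))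
      exact eq_mechanism_of_encode_eq Φ f g (fun x y t h => (hcausal x y t h).2) hinj hinv
        ih ((hxCF t).2 ht) habduct
end
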